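/- Let k, l ≥ 1. Then every T ∈ U(k,l) has an eigenvector v ∈ ℂ^{k+l} \ {0} with ⟨v,v⟩_{k,l} ≤ 0; equivalently, the induced projective transformation of ℙ^{k+l−1} has a fixed point in the closure of the projectivized negative cone { [v] : ⟨v,v⟩_{k,l} < 0 }. -/

import Mathlib

open Matrix

noncomputable section

/-- The Hermitian form `⟨u,v⟩_{k,l} = −∑_{j<k} u_j conj(v_j) + ∑_{j≥k} u_j conj(v_j)`
of signature `(k,l)` on `ℂ^{k+l}` (indices `j < k` are the negative ones). -/
def hform (k l : ℕ) (u v : Fin (k + l) → ℂ) : ℂ :=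
  ∑ j : Fin (k + l),
    if (j : ℕ) < k then -(u j * starRingEnd ℂ (v j)) else u j * starRingEnd ℂ (v j)

/-!
Suppose, for a contradiction, that every eigenvector `v` of an isometry `f` of a sesquilinear
form `B` on a finite-dimensional complex space has `Re B(v,v) > 0`. Then every eigenvalue satisfies
`μ μ̄ = 1`, eigenvectors for distinct eigenvalues are `B`-orthogonal, and there is no Jordan chain
`f x = μ x + v`, `f v = μ v` with `v ≠ 0`, since invariance of `B` forces `B(v,v) = 0`. Hence `f` is
diagonalizable, `B(x,x)` is the sum of the values of `B` on the eigencomponents of `x`, and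
`Re B(x,x) ≥ 0` for every `x`. For `⟨·,·⟩_{k,l}` this is contradicted by the first basis vector,
which has `⟨e₀,e₀⟩ = -1`.
-/

open Module End ComplexConjugate

theorem Module.End.maxGenEigenspace_eq_eigenspace_of_genEigenspace_two_le {K V : Type*} [Field K]
    [AddCommGroup V] [Module K V] {f : End K V} {μ : K}
    (h : f.genEigenspace μ 2 ≤ f.eigenspace μ) : f.maxGenEigenspace μ = f.eigenspace μ := by
  rw [← Nat.cast_two, genEigenspace_nat, eigenspace_def] at h
  have hker : LinearMap.ker ((f - μ • 1) ^ 1) = LinearMap.ker ((f - μ • 1) ^ (1 : ℕ).succ) :=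
    le_antisymm (LinearMap.ker_le_ker_comp _ _) (by simpa using h)
  refine le_antisymm (fun x hx => ?_) (f.genEigenspace_le_maximal μ 1)
  obtain ⟨n, hn⟩ := (f.mem_maxGenEigenspace μ x).1 hx
  have hx1 : x ∈ LinearMap.ker ((f - μ • 1) ^ (1 + n)) := by
    rw [pow_add, Module.End.mul_eq_comp]; exact LinearMap.ker_le_ker_comp _ _ hn
  rwa [← ker_pow_constant hker n, pow_one, ← eigenspace_def] at hx1

namespace LinearMap

variable {V : Type*} [AddCommGroup V] [Module ℂ V] {B : V →ₗ[ℂ] V →ₗ⋆[ℂ] ℂ} {f : End ℂ V}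

theorem mul_conj_mul_apply_eigenvectors (hf : ∀ u v, B (f u) (f v) = B u v) {u v : V} {μ ν : ℂ}
    (hu : f u = μ • u) (hv : f v = ν • v) : μ * conj ν * B u v = B u v := by
  have h := hf u v
  simp only [hu, hv, map_smul, map_smulₛₗ, smul_apply, smul_eq_mul] at h
  linear_combination h

theorem mul_conj_eigenvalue_eq_one (hf : ∀ u v, B (f u) (f v) = B u v) {v : V} {μ : ℂ}
    (hv : f v = μ • v) (hvv : B v v ≠ 0) : μ * conj μ = 1 := by
  have := mul_conj_mul_apply_eigenvectors hf hv hv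
  exact (mul_left_eq_self₀.1 this).resolve_right hvv

theorem apply_eigenvectors_eq_zero (hf : ∀ u v, B (f u) (f v) = B u v) {u v : V} {μ ν : ℂ}
    (hu : f u = μ • u) (hv : f v = ν • v) (hν : ν * conj ν = 1) (hμν : μ ≠ ν) : B u v = 0 := by
  refine (mul_left_eq_self₀.1 (mul_conj_mul_apply_eigenvectors hf hu hv)).resolve_left
    fun h => hμν ?_
  exact mul_right_cancel₀ (right_ne_zero_of_mul_eq_one hν) (h.trans hν.symm)

theorem apply_self_eq_zero_of_jordan_chain (hf : ∀ u v, B (f u) (f v) = B u v) {x v : V} {μ : ℂ}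
    (hμ : μ * conj μ = 1) (hv : f v = μ • v) (hx : f x = μ • x + v) : B v v = 0 := by
  have h := hf x v
  simp only [hx, hv, map_add, map_smul, map_smulₛₗ, add_apply, smul_apply, smul_eq_mul] at h
  have hμ0 : conj μ ≠ 0 := right_ne_zero_of_mul_eq_one hμ
  have : conj μ * B v v = 0 := by linear_combination h - B x v * hμ
  exact (mul_eq_zero.1 this).resolve_left hμ0

theorem re_apply_self_nonneg_of_mem_eigenspace
    (hpos : ∀ v, v ≠ 0 → (∃ μ : ℂ, f v = μ • v) → 0 < (B v v).re)
    {μ : ℂ} {v : V} (hv : v ∈ f.eigenspace μ) : 0 ≤ (B v v).re := by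
  rcases eq_or_ne v 0 with rfl | hv0
  · simp
  · exact (hpos v hv0 ⟨μ, mem_eigenspace_iff.1 hv⟩).le

theorem apply_eq_zero_of_mem_eigenspace_of_ne (hf : ∀ u v, B (f u) (f v) = B u v)
    (hpos : ∀ v, v ≠ 0 → (∃ μ : ℂ, f v = μ • v) → 0 < (B v v).re)
    {μ ν : ℂ} {u v : V} (hu : u ∈ f.eigenspace μ) (hv : v ∈ f.eigenspace ν) (hμν : μ ≠ ν) :
    B u v = 0 := by
  rcases eq_or_ne v 0 with rfl | hv0
  · simp
  rw [mem_eigenspace_iff] at hu hv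
  have hvv := hpos v hv0 ⟨ν, hv⟩
  have hν := mul_conj_eigenvalue_eq_one hf hv fun h => by simp [h] at hvv
  exact apply_eigenvectors_eq_zero hf hu hv hν hμν

theorem genEigenspace_two_le_eigenspace (hf : ∀ u v, B (f u) (f v) = B u v)
    (hpos : ∀ v, v ≠ 0 → (∃ μ : ℂ, f v = μ • v) → 0 < (B v v).re) (μ : ℂ) :
    f.genEigenspace μ 2 ≤ f.eigenspace μ := by
  intro x hx
  rw [← Nat.cast_two, mem_genEigenspace_nat, mem_ker, pow_two, End.mul_apply] at hx
  set v := (f - μ • 1) x with hv_def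
  have hv : f v = μ • v := by simpa [sub_eq_zero] using hx
  have hx' : f x = μ • x + v := by simp [hv_def]
  rw [mem_eigenspace_iff]
  by_contra hne
  have hv0 : v ≠ 0 := by simpa [hv_def, sub_eq_zero] using hne
  have hvv := hpos v hv0 ⟨μ, hv⟩
  have hμ := mul_conj_eigenvalue_eq_one hf hv fun h => by simp [h] at hvv
  simp [apply_self_eq_zero_of_jordan_chain hf hμ hv hx'] at hvv

theorem re_apply_self_nonneg [FiniteDimensional ℂ V] (hf : ∀ u v, B (f u) (f v) = B u v)
    (hpos : ∀ v, v ≠ 0 → (∃ μ : ℂ, f v = μ • v) → 0 < (B v v).re) (x : V) :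
    0 ≤ (B x x).re := by
  have htop : ⨆ μ, f.eigenspace μ = ⊤ := by
    rw [← f.iSup_maxGenEigenspace_eq_top]
    simp_rw [maxGenEigenspace_eq_eigenspace_of_genEigenspace_two_le
      (genEigenspace_two_le_eigenspace hf hpos _)]
  obtain ⟨c, hc, rfl⟩ :=
    (Submodule.mem_iSup_iff_exists_finsupp _ x).1 (htop ▸ Submodule.mem_top)
  have hdiag : B (c.sum fun _ v => v) (c.sum fun _ v => v) = ∑ μ ∈ c.support, B (c μ) (c μ) := by
    simp only [Finsupp.sum, map_sum, LinearMap.sum_apply]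
    refine Finset.sum_congr rfl fun μ hμ => Finset.sum_eq_single_of_mem μ hμ fun ν _ hνμ => ?_
    exact apply_eq_zero_of_mem_eigenspace_of_ne hf hpos (hc ν) (hc μ) hνμ
  rw [hdiag, Complex.re_sum]
  exact Finset.sum_nonneg fun μ _ => re_apply_self_nonneg_of_mem_eigenspace hpos (hc μ)

theorem exists_eigenvector_re_apply_self_nonpos [FiniteDimensional ℂ V]
    (hf : ∀ u v, B (f u) (f v) = B u v) {x : V} (hx : (B x x).re < 0) :
    ∃ v, v ≠ 0 ∧ (∃ μ : ℂ, f v = μ • v) ∧ (B v v).re ≤ 0 := by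
  by_contra! hpos
  exact hx.not_ge (re_apply_self_nonneg hf hpos x)

end LinearMap

section SignatureForm

variable {k l : ℕ}

theorem hform_add_left (u₁ u₂ v : Fin (k + l) → ℂ) :
    hform k l (u₁ + u₂) v = hform k l u₁ v + hform k l u₂ v := by
  simp only [hform, ← Finset.sum_add_distrib, Pi.add_apply]
  refine Finset.sum_congr rfl fun j _ => by split_ifs <;> ring

theorem hform_smul_left (c : ℂ) (u v : Fin (k + l) → ℂ) :
    hform k l (c • u) v = c • hform k l u v := by
  simp only [hform, Pi.smul_apply, smul_eq_mul, Finset.mul_sum]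
  refine Finset.sum_congr rfl fun j _ => by split_ifs <;> ring

theorem hform_add_right (u v₁ v₂ : Fin (k + l) → ℂ) :
    hform k l u (v₁ + v₂) = hform k l u v₁ + hform k l u v₂ := by
  simp only [hform, ← Finset.sum_add_distrib, Pi.add_apply, map_add]
  refine Finset.sum_congr rfl fun j _ => by split_ifs <;> ring

theorem hform_smul_right (c : ℂ) (u v : Fin (k + l) → ℂ) :
    hform k l u (c • v) = conj c • hform k l u v := by
  simp only [hform, Pi.smul_apply, smul_eq_mul, Finset.mul_sum, map_mul]
  refine Finset.sum_congr rfl fun j _ => by split_ifs <;> ring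

variable (k l) in
def hformₛₗ : (Fin (k + l) → ℂ) →ₗ[ℂ] (Fin (k + l) → ℂ) →ₗ⋆[ℂ] ℂ :=
  LinearMap.mk₂'ₛₗ _ _ (hform k l) hform_add_left hform_smul_left hform_add_right hform_smul_right

@[simp]
theorem hformₛₗ_apply (u v : Fin (k + l) → ℂ) : hformₛₗ k l u v = hform k l u v := rfl

theorem hform_single_self_of_lt {i : Fin (k + l)} (hi : (i : ℕ) < k) :
    hform k l (Pi.single i 1) (Pi.single i 1) = -1 := by
  rw [hform, Finset.sum_eq_single i (fun j _ hj => by simp [hj]) (by simp)]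
  simp [hi]

end SignatureForm

theorem stmt11_general (k l : ℕ) (hk : 1 ≤ k) (T : GL (Fin (k + l)) ℂ)
    (hU : ∀ u v : Fin (k + l) → ℂ,
      hform k l ((T : Matrix (Fin (k + l)) (Fin (k + l)) ℂ).mulVec u)
        ((T : Matrix (Fin (k + l)) (Fin (k + l)) ℂ).mulVec v) = hform k l u v) :
    ∃ v : Fin (k + l) → ℂ, v ≠ 0 ∧
      (∃ μ : ℂ, (T : Matrix (Fin (k + l)) (Fin (k + l)) ℂ).mulVec v = μ • v) ∧
      (hform k l v v).re ≤ 0 :=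
  LinearMap.exists_eigenvector_re_apply_self_nonpos (B := hformₛₗ k l)
    (f := (T : Matrix (Fin (k + l)) (Fin (k + l)) ℂ).mulVecLin) hU
    (x := Pi.single ⟨0, by omega⟩ 1) (by simp [hform_single_self_of_lt (i := ⟨0, _⟩) hk])

/-- Every `T ∈ U(k,l)` has an eigenvector `v ≠ 0` with
`⟨v,v⟩_{k,l} ≤ 0` (the form takes real values on the diagonal, so this is expressed
via the real part); equivalently the induced projective map fixes a point of the
closure of the projectivized negative cone. -/
theorem stmt11 (k l : ℕ) (hk : 1 ≤ k) (hl : 1 ≤ l) (T : GL (Fin (k + l)) ℂ)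
    (hU : ∀ u v : Fin (k + l) → ℂ,
      hform k l ((T : Matrix (Fin (k + l)) (Fin (k + l)) ℂ).mulVec u)
        ((T : Matrix (Fin (k + l)) (Fin (k + l)) ℂ).mulVec v) = hform k l u v) :
    ∃ v : Fin (k + l) → ℂ, v ≠ 0 ∧
      (∃ μ : ℂ, (T : Matrix (Fin (k + l)) (Fin (k + l)) ℂ).mulVec v = μ • v) ∧
      (hform k l v v).re ≤ 0 :=
  stmt11_general k l hk T hU
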